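/- (Frequency propagation for elastic networks, spring-constant rule.) Let V = EuclideanSpace ℝ (Fin M) (state of the M spring extensions r), let E_nl : V → ℝ be C³, let C : V → ℝ be C², and for parameters k, ℓ : Fin M → ℝ define the elastic energy E (k,ℓ) r = (1/2)·Σ_e k e · (r e − ℓ e)² + E_nl r. Let r⋆ : ((Fin M → ℝ) × (Fin M → ℝ)) → ℝ → V be C³ jointly, satisfying for all (k,ℓ) and β the equilibrium condition gradient (fun r => E (k,ℓ) r + β·C r) (r⋆ (k,ℓ) β) = 0. Let L (k,ℓ) = C (r⋆ (k,ℓ) 0), let ω > 0, T = 2π/ω, and define a(γ) = (1/T)·∫₀ᵀ r⋆ (k,ℓ) (γ·sin(ωt)) dt and b(γ) = (2/T)·∫₀ᵀ sin(ωt) • r⋆ (k,ℓ) (γ·sin(ωt)) dt. Then for every fixed (k,ℓ) and every spring e ∈ Fin M, the function γ ↦ b(γ) e · (a(γ) e − ℓ e) − γ·(∂L/∂(k e)) is big-O of γ³ as γ → 0, where ∂L/∂(k e) denotes the partial derivative of L with respect to the spring constant k e. -/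

import Mathlib

/-!
Equilibrium propagation: for `Φ (θ, β) = E θ (r⋆ θ β) + β * C (r⋆ θ β)`, stationarity of `r⋆`
gives `∂Φ/∂β = C ∘ r⋆` and `∂Φ/∂θ = (∂E/∂θ) (θ, r⋆)`, so symmetry of the second derivative of `Φ`
turns `∂L/∂k_e` into `d/dβ ½ (r⋆_e - ℓ_e)²` at `β = 0`, that is `(r⋆_e - ℓ_e) * ∂r⋆_e/∂β`.
Taylor-expanding `β ↦ r⋆ β` and integrating against the moments `∫ sin = ∫ sin³ = 0`,
`∫ sin² = T / 2` over one period gives `a(γ) = r⋆ + O(γ²)` and `b(γ) = γ ∂r⋆/∂β + O(γ³)`.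
-/

open MeasureTheory

section EquilibriumPropagation

variable {Θ V : Type*} [NormedAddCommGroup Θ] [NormedSpace ℝ Θ]
  [NormedAddCommGroup V] [NormedSpace ℝ V]
  {F : Θ × V → ℝ} {C : V → ℝ} {x : Θ × ℝ → V}

theorem fderiv_energy_comp_critical_apply
    (hF : Differentiable ℝ F) (hC : Differentiable ℝ C) (hx : Differentiable ℝ x)
    (hcrit : ∀ p : Θ × ℝ, fderiv ℝ (fun r => F (p.1, r) + p.2 * C r) (x p) = 0)
    (p v : Θ × ℝ) :
    fderiv ℝ (fun p : Θ × ℝ => F (p.1, x p) + p.2 * C (x p)) p v =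
      fderiv ℝ F (p.1, x p) (v.1, 0) + v.2 * C (x p) := by
  set DF := fderiv ℝ F (p.1, x p)
  have hDF : HasFDerivAt F DF (p.1, x p) := (hF _).hasFDerivAt
  have hDC : HasFDerivAt C (fderiv ℝ C (x p)) (x p) := (hC _).hasFDerivAt
  have hcrit_apply : ∀ w, DF (0, w) + p.2 * fderiv ℝ C (x p) w = 0 := by
    intro w
    have h : HasFDerivAt (fun r => F (p.1, r) + p.2 * C r)
        (DF.comp (ContinuousLinearMap.inr ℝ Θ V) + p.2 • fderiv ℝ C (x p)) (x p) :=
      (hDF.comp (x p) (hasFDerivAt_prodMk_right p.1 (x p))).add (hDC.const_mul p.2)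
    simpa using DFunLike.congr_fun (h.fderiv.symm.trans (hcrit p)) w
  have hx' := (hx p).hasFDerivAt
  have hΦ : HasFDerivAt (fun p : Θ × ℝ => F (p.1, x p) + p.2 * C (x p)) _ p :=
    (hDF.comp p (hasFDerivAt_fst.prodMk hx')).fun_add (hasFDerivAt_snd.fun_mul (hDC.comp p hx'))
  have hsplit : DF (v.1, fderiv ℝ x p v) = DF (v.1, 0) + DF (0, fderiv ℝ x p v) := by
    rw [← map_add, Prod.mk_add_mk, add_zero, zero_add]
  rw [hΦ.fderiv]
  simp only [add_apply, ContinuousLinearMap.comp_apply,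
    ContinuousLinearMap.prod_apply, ContinuousLinearMap.coe_fst', hsplit,
    smul_apply, smul_eq_mul, ContinuousLinearMap.coe_snd']
  linarith [hcrit_apply (fderiv ℝ x p v)]

theorem fderiv_cost_eq_deriv_fderiv_energy
    (hF : ContDiff ℝ 2 F) (hC : ContDiff ℝ 2 C) (hx : ContDiff ℝ 2 x)
    (hcrit : ∀ p : Θ × ℝ, fderiv ℝ (fun r => F (p.1, r) + p.2 * C r) (x p) = 0)
    (θ₀ θ : Θ) (β₀ : ℝ) :
    fderiv ℝ (fun θ' => C (x (θ', β₀))) θ₀ θ =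
      deriv (fun β => fderiv ℝ F (θ₀, x (θ₀, β)) (θ, 0)) β₀ := by
  set Φ : Θ × ℝ → ℝ := fun p => F (p.1, x p) + p.2 * C (x p)
  have hΦ : ContDiff ℝ 2 Φ :=
    (hF.comp (contDiff_fst.prodMk hx)).add (contDiff_snd.mul (hC.comp hx))
  have hdΦ : ∀ p v, fderiv ℝ Φ p v = fderiv ℝ F (p.1, x p) (v.1, 0) + v.2 * C (x p) :=
    fderiv_energy_comp_critical_apply (hF.differentiable two_ne_zero)
      (hC.differentiable two_ne_zero) (hx.differentiable two_ne_zero) hcrit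
  have hsecond : ∀ u v, fderiv ℝ (fderiv ℝ Φ) (θ₀, β₀) u v =
      fderiv ℝ (fun p => fderiv ℝ Φ p v) (θ₀, β₀) u := by
    intro u v
    rw [fderiv_clm_apply ((hΦ.fderiv_right one_add_one_eq_two.le).differentiable one_ne_zero _)
      (differentiableAt_const v)]
    simp
  have hsymm := hΦ.contDiffAt.isSymmSndFDerivAt (x := (θ₀, β₀)) (by simp) (θ, 0) (0, 1)
  rw [hsecond, hsecond] at hsymm
  simp only [hdΦ, Prod.mk_zero_zero, map_zero, zero_add, zero_mul, add_zero, one_mul] at hsymm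
  have hcost : DifferentiableAt ℝ (fun p => C (x p)) (θ₀, β₀) :=
    (hC.comp hx).differentiable two_ne_zero _
  have hpartial : DifferentiableAt ℝ (fun p => fderiv ℝ F (p.1, x p) (θ, 0)) (θ₀, β₀) :=
    ((hF.fderiv_right one_add_one_eq_two.le).comp
      (contDiff_fst.prodMk (hx.of_le one_le_two))).clm_apply contDiff_const
      |>.differentiable one_ne_zero _
  have hleft : HasFDerivAt (fun θ' => C (x (θ', β₀)))
      ((fderiv ℝ (fun p => C (x p)) (θ₀, β₀)).comp (ContinuousLinearMap.inl ℝ Θ ℝ)) θ₀ :=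
    hcost.hasFDerivAt.comp (f := fun θ' : Θ => (θ', β₀)) θ₀
      (hasFDerivAt_prodMk_left (𝕜 := ℝ) θ₀ β₀)
  have hright : HasDerivAt (fun β => fderiv ℝ F (θ₀, x (θ₀, β)) (θ, 0))
      (fderiv ℝ (fun p => fderiv ℝ F (p.1, x p) (θ, 0)) (θ₀, β₀) (0, 1)) β₀ :=
    hpartial.hasFDerivAt.comp_hasDerivAt β₀ ((hasDerivAt_const β₀ θ₀).prodMk (hasDerivAt_id β₀))
  rw [hleft.fderiv, hright.deriv]
  simpa using hsymm

end EquilibriumPropagation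

section ElasticEnergy

variable {ι : Type*} [Fintype ι] {Enl : EuclideanSpace ℝ ι → ℝ}

theorem contDiff_elasticEnergy {n : WithTop ℕ∞} (hEnl : ContDiff ℝ n Enl) :
    ContDiff ℝ n fun q : ((ι → ℝ) × (ι → ℝ)) × EuclideanSpace ℝ ι =>
      (1 / 2) * ∑ i, q.1.1 i * (q.2 i - q.1.2 i) ^ 2 + Enl q.2 := by
  fun_prop

theorem fderiv_elasticEnergy_single_springConstant [DecidableEq ι] (hEnl : Differentiable ℝ Enl)
    (q : ((ι → ℝ) × (ι → ℝ)) × EuclideanSpace ℝ ι) (e : ι) :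
    fderiv ℝ (fun q : ((ι → ℝ) × (ι → ℝ)) × EuclideanSpace ℝ ι =>
        (1 / 2) * ∑ i, q.1.1 i * (q.2 i - q.1.2 i) ^ 2 + Enl q.2) q ((Pi.single e 1, 0), 0) =
      (1 / 2) * (q.2 e - q.1.2 e) ^ 2 := by
  set F := fun q : ((ι → ℝ) × (ι → ℝ)) × EuclideanSpace ℝ ι =>
    (1 / 2) * ∑ i, q.1.1 i * (q.2 i - q.1.2 i) ^ 2 + Enl q.2
  have hline : (fun t : ℝ => F (q + t • ((Pi.single e 1, 0), 0))) =
      fun t => F q + t * ((1 / 2) * (q.2 e - q.1.2 e) ^ 2) := by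
    funext t
    simp only [F, one_div, Prod.smul_mk, smul_zero, Prod.fst_add, Pi.add_apply, Pi.smul_apply,
      Pi.single_apply, smul_eq_mul, mul_ite, mul_one, mul_zero, Prod.snd_add, add_zero,
      Pi.zero_apply, add_mul, ite_mul, zero_mul, Finset.sum_add_distrib, Finset.sum_ite_eq',
      Finset.mem_univ, ↓reduceIte]
    ring
  have hF : HasLineDerivAt ℝ F ((1 / 2) * (q.2 e - q.1.2 e) ^ 2) q ((Pi.single e 1, 0), 0) := by
    rw [HasLineDerivAt, hline]
    simpa using ((hasDerivAt_id (0 : ℝ)).mul_const ((1 / 2) * (q.2 e - q.1.2 e) ^ 2)).const_add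
      (F q)
  rw [← (DifferentiableAt.lineDeriv_eq_fderiv (by fun_prop)), hF.lineDeriv]

end ElasticEnergy

section Expansions

open Asymptotics Filter Topology Set

variable {E : Type*} [NormedAddCommGroup E] [NormedSpace ℝ E]

theorem taylor_isBigO_univ {f : ℝ → E} {n : ℕ} (hf : ContDiff ℝ (n + 1) f) (x₀ : ℝ) :
    (fun x => f x - taylorWithinEval f n univ x₀ x) =O[𝓝 x₀] fun x => (x - x₀) ^ (n + 1) := by
  have hnext : (fun x => (((n + 1 : ℝ) * n.factorial)⁻¹ * (x - x₀) ^ (n + 1)) •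
      iteratedDerivWithin (n + 1) f univ x₀) =O[𝓝 x₀] fun x => (x - x₀) ^ (n + 1) :=
    IsBigO.of_bound _ (Eventually.of_forall fun x => by
      rw [norm_smul, norm_mul, mul_right_comm])
  simpa [sub_add] using (taylor_isLittleO_univ (x₀ := x₀) hf).isBigO.add hnext

theorem isBigO_intervalIntegral_smul_comp_mul {ρ : ℝ → E} {n : ℕ}
    (hρ : ρ =O[𝓝 0] fun x => x ^ n) {g s : ℝ → ℝ} (hg : ∀ t, |g t| ≤ 1) (hs : ∀ t, |s t| ≤ 1)
    (a b : ℝ) :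
    (fun γ => ∫ t in a..b, g t • ρ (γ * s t)) =O[𝓝 0] fun γ => γ ^ n := by
  obtain ⟨c, hc, hρc⟩ := hρ.exists_nonneg
  obtain ⟨δ, hδ, hball⟩ := Metric.eventually_nhds_iff.mp hρc.bound
  refine IsBigOWith.isBigO (c := c * |b - a|) (IsBigOWith.of_bound ?_)
  filter_upwards [Metric.ball_mem_nhds 0 hδ] with γ hγ
  rw [mul_right_comm]
  refine intervalIntegral.norm_integral_le_of_norm_le_const fun t _ => ?_
  have hγs : ‖γ * s t‖ ≤ ‖γ‖ := by
    simpa [abs_mul] using mul_le_of_le_one_right (abs_nonneg γ) (hs t)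
  calc ‖g t • ρ (γ * s t)‖ ≤ 1 * (c * ‖(γ * s t) ^ n‖) := by
        rw [norm_smul]
        refine mul_le_mul (hg t) (hball ?_) (norm_nonneg _) zero_le_one
        simpa using hγs.trans_lt (by simpa using hγ)
    _ ≤ c * ‖γ ^ n‖ := by
        rw [one_mul, norm_pow, norm_pow]
        gcongr

theorem isBigO_intervalIntegral_smul_comp_mul_sub_moments [CompleteSpace E] {f : ℝ → E} {n : ℕ}
    (hf : ContDiff ℝ (n + 1) f) {g s : ℝ → ℝ} (hgc : Continuous g) (hsc : Continuous s)
    (hg : ∀ t, |g t| ≤ 1) (hs : ∀ t, |s t| ≤ 1) (a b : ℝ) :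
    (fun γ => (∫ t in a..b, g t • f (γ * s t)) -
        ∑ k ∈ Finset.range (n + 1),
          ((k.factorial : ℝ)⁻¹ * γ ^ k * ∫ t in a..b, g t * s t ^ k) • iteratedDeriv k f 0)
      =O[𝓝 0] fun γ => γ ^ (n + 1) := by
  set P : ℝ → E := taylorWithinEval f n univ 0
  have hP : ∀ x, P x = ∑ k ∈ Finset.range (n + 1),
      ((k.factorial : ℝ)⁻¹ * x ^ k) • iteratedDeriv k f 0 := by
    intro x
    simp [P, taylor_within_apply, iteratedDerivWithin_univ]
  have hPc : Continuous P := by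
    simp only [funext hP]
    fun_prop
  have hint : ∀ γ, ∫ t in a..b, g t • P (γ * s t) = ∑ k ∈ Finset.range (n + 1),
      ((k.factorial : ℝ)⁻¹ * γ ^ k * ∫ t in a..b, g t * s t ^ k) • iteratedDeriv k f 0 := by
    intro γ
    simp only [hP, Finset.smul_sum, smul_smul]
    rw [intervalIntegral.integral_finsetSum fun k _ =>
      Continuous.intervalIntegrable (by fun_prop) _ _]
    refine Finset.sum_congr rfl fun k _ => ?_
    rw [intervalIntegral.integral_smul_const, ← intervalIntegral.integral_const_mul]
    congr 1
    refine intervalIntegral.integral_congr fun t _ => ?_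
    ring
  have hrem := isBigO_intervalIntegral_smul_comp_mul (ρ := fun x => f x - P x)
    (by simpa using taylor_isBigO_univ hf 0) hg hs a b
  refine hrem.congr_left fun γ => ?_
  rw [← hint, ← intervalIntegral.integral_sub]
  · simp_rw [smul_sub]
  · exact Continuous.intervalIntegrable (hgc.smul (hf.continuous.comp (by fun_prop))) _ _
  · exact Continuous.intervalIntegrable (hgc.smul (hPc.comp (by fun_prop))) _ _

end Expansions

section SineMoments

open Real

theorem integral_sin_mul_pow_period {ω : ℝ} (hω : ω ≠ 0) (n : ℕ) :
    ∫ t in (0 : ℝ)..2 * π / ω, sin (ω * t) ^ n = ω⁻¹ * ∫ x in (0 : ℝ)..2 * π, sin x ^ n := by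
  rw [intervalIntegral.integral_comp_mul_left (fun x => sin x ^ n) hω, mul_zero,
    mul_div_cancel₀ _ hω, smul_eq_mul]

theorem integral_sin_pow_one_two_pi : ∫ x in (0 : ℝ)..2 * π, sin x ^ 1 = 0 := by
  simp

theorem integral_sin_pow_two_two_pi : ∫ x in (0 : ℝ)..2 * π, sin x ^ 2 = π := by
  simp [integral_sin_sq]

theorem integral_sin_pow_three_two_pi : ∫ x in (0 : ℝ)..2 * π, sin x ^ 3 = 0 := by
  simp [integral_sin_pow (n := 1)]

end SineMoments

section FourierCoefficients

open Real Asymptotics Filter Topology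

variable {E : Type*} [NormedAddCommGroup E] [NormedSpace ℝ E] [CompleteSpace E] {f : ℝ → E}
  {ω : ℝ}

theorem isBigO_mean_comp_mul_sin_sub (hf : ContDiff ℝ 2 f) (hω : ω ≠ 0) :
    (fun γ => (1 / (2 * π / ω)) • (∫ t in (0 : ℝ)..2 * π / ω, f (γ * sin (ω * t))) - f 0)
      =O[𝓝 0] fun γ => γ ^ 2 := by
  have h := isBigO_intervalIntegral_smul_comp_mul_sub_moments (n := 1) (hf.of_le (by norm_num))
    (g := fun _ => 1) continuous_const (s := fun t => sin (ω * t)) (by fun_prop)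
    (fun _ => by simp) (fun t => abs_sin_le_one _) 0 (2 * π / ω)
  refine (h.const_smul_left (1 / (2 * π / ω))).congr_left fun γ => ?_
  simp only [Finset.sum_range_succ, Finset.sum_range_zero, one_smul, one_mul,
    integral_sin_mul_pow_period hω, integral_sin_pow_one_two_pi, Pi.smul_apply, mul_zero,
    zero_smul, add_zero, zero_add, Nat.factorial_zero, Nat.cast_one, inv_one, pow_zero,
    iteratedDeriv_zero, smul_sub, smul_smul]
  field_simp
  simp

theorem isBigO_sinCoeff_comp_mul_sin_sub (hf : ContDiff ℝ 3 f) (hω : ω ≠ 0) :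
    (fun γ => (2 / (2 * π / ω)) • (∫ t in (0 : ℝ)..2 * π / ω, sin (ω * t) • f (γ * sin (ω * t)))
        - γ • deriv f 0) =O[𝓝 0] fun γ => γ ^ 3 := by
  have h := isBigO_intervalIntegral_smul_comp_mul_sub_moments (n := 2) (hf.of_le (by norm_num))
    (g := fun t => sin (ω * t)) (by fun_prop) (s := fun t => sin (ω * t)) (by fun_prop)
    (fun t => abs_sin_le_one _) (fun t => abs_sin_le_one _) 0 (2 * π / ω)
  refine (h.const_smul_left (2 / (2 * π / ω))).congr_left fun γ => ?_
  simp only [Finset.sum_range_succ, Finset.sum_range_zero, ← pow_succ',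
    integral_sin_mul_pow_period hω, integral_sin_pow_one_two_pi, integral_sin_pow_two_two_pi,
    integral_sin_pow_three_two_pi, Pi.smul_apply, mul_zero, zero_smul, add_zero, zero_add,
    iteratedDeriv_one, smul_sub, smul_smul]
  field_simp
  simp

end FourierCoefficients

open Asymptotics Filter Topology in
theorem isBigO_mul_sub_const_sub {A B : ℝ → ℝ} {A₀ B₁ : ℝ}
    (hA : (fun γ => A γ - A₀) =O[𝓝 0] fun γ => γ ^ 2)
    (hB : (fun γ => B γ - γ * B₁) =O[𝓝 0] fun γ => γ ^ 3) (c : ℝ) :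
    (fun γ => B γ * (A γ - c) - γ * (B₁ * (A₀ - c))) =O[𝓝 0] fun γ => γ ^ 3 := by
  have hpow : (fun γ : ℝ => γ ^ 2) =O[𝓝 0] fun _ => (1 : ℝ) :=
    ((continuous_pow 2).tendsto 0).isBigO_one ℝ
  have hA₁ : (fun γ => A γ - c) =O[𝓝 0] fun _ => (1 : ℝ) :=
    ((hA.trans hpow).add (isBigO_const_one ℝ (A₀ - c) _)).congr_left fun γ => by ring
  have hlin : (fun γ : ℝ => γ * B₁) =O[𝓝 0] fun γ => γ :=
    ((isBigO_refl _ _).const_mul_left B₁).congr_left fun γ => mul_comm _ _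
  have h₁ := (hB.mul hA₁).congr_right fun γ => mul_one (γ ^ 3)
  have h₂ := (hlin.mul hA).congr_right fun γ => (pow_succ' γ 2).symm
  exact (h₁.add h₂).congr_left fun γ => by ring

theorem fderiv_loss_single_springConstant {ι : Type*} [Fintype ι] [DecidableEq ι]
    {Enl C : EuclideanSpace ℝ ι → ℝ} (hEnl : ContDiff ℝ 2 Enl) (hC : ContDiff ℝ 2 C)
    {E : (ι → ℝ) × (ι → ℝ) → EuclideanSpace ℝ ι → ℝ}
    (hEdef : ∀ kl r, E kl r = (1 / 2) * ∑ e, kl.1 e * (r e - kl.2 e) ^ 2 + Enl r)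
    {rstar : (ι → ℝ) × (ι → ℝ) → ℝ → EuclideanSpace ℝ ι}
    (hr : ContDiff ℝ 2 (fun q : ((ι → ℝ) × (ι → ℝ)) × ℝ => rstar q.1 q.2))
    (heq : ∀ kl β, gradient (fun r => E kl r + β * C r) (rstar kl β) = 0)
    (kl : (ι → ℝ) × (ι → ℝ)) (e : ι) :
    fderiv ℝ (fun kl => C (rstar kl 0)) kl (Pi.single e 1, 0) =
      deriv (rstar kl) 0 e * (rstar kl 0 e - kl.2 e) := by
  have hEnergy : (fun q : ((ι → ℝ) × (ι → ℝ)) × EuclideanSpace ℝ ι => E q.1 q.2) =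
      fun q => (1 / 2) * ∑ i, q.1.1 i * (q.2 i - q.1.2 i) ^ 2 + Enl q.2 :=
    funext fun q => hEdef q.1 q.2
  have hcrit : ∀ p : ((ι → ℝ) × (ι → ℝ)) × ℝ,
      fderiv ℝ (fun r => E p.1 r + p.2 * C r) (rstar p.1 p.2) = 0 :=
    fun p => (InnerProductSpace.toDual ℝ _).symm.map_eq_zero_iff.mp (heq p.1 p.2)
  have hφe : HasDerivAt (fun β => rstar kl β e) (deriv (rstar kl) 0 e) 0 :=
    (EuclideanSpace.proj (𝕜 := ℝ) e).hasFDerivAt.comp_hasDerivAt 0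
      ((hr.comp (contDiff_const.prodMk contDiff_id)).differentiable two_ne_zero 0).hasDerivAt
  rw [fderiv_cost_eq_deriv_fderiv_energy (F := fun q => E q.1 q.2)
    (x := fun p => rstar p.1 p.2) (hEnergy ▸ contDiff_elasticEnergy hEnl) hC hr hcrit kl
    (Pi.single e 1, 0) 0]
  simp only [hEnergy, fderiv_elasticEnergy_single_springConstant
    (hEnl.differentiable two_ne_zero)]
  refine (((hφe.sub_const (kl.2 e)).pow 2).const_mul (1 / 2)).deriv.trans ?_
  simp only [one_div, Nat.cast_ofNat, Nat.add_one_sub_one, pow_one]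
  ring

/-- Frequency propagation for elastic networks, spring-constant rule:
with elastic energy `E (k,ℓ) r = (1/2)·Σ_e k_e (r_e − ℓ_e)² + E_nl r`, equilibrium state
`r⋆`, loss `L (k,ℓ) = C (r⋆ (k,ℓ) 0)`, and Fourier coefficients `a(γ)`, `b(γ)` of the
response, for each spring `e`:
`b(γ)_e·(a(γ)_e − ℓ_e) − γ·∂L/∂k_e = O(γ³)` as `γ → 0`. -/
theorem stmt14 {M : ℕ}
    (Enl : EuclideanSpace ℝ (Fin M) → ℝ) (hEnl : ContDiff ℝ 3 Enl)
    (C : EuclideanSpace ℝ (Fin M) → ℝ) (hC : ContDiff ℝ 2 C)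
    (E : (Fin M → ℝ) × (Fin M → ℝ) → EuclideanSpace ℝ (Fin M) → ℝ)
    (hEdef : ∀ (kl : (Fin M → ℝ) × (Fin M → ℝ)) (r : EuclideanSpace ℝ (Fin M)),
      E kl r = (1 / 2) * ∑ e, kl.1 e * (r e - kl.2 e) ^ 2 + Enl r)
    (rstar : (Fin M → ℝ) × (Fin M → ℝ) → ℝ → EuclideanSpace ℝ (Fin M))
    (hr : ContDiff ℝ 3 (fun q : ((Fin M → ℝ) × (Fin M → ℝ)) × ℝ => rstar q.1 q.2))
    (heq : ∀ (kl : (Fin M → ℝ) × (Fin M → ℝ)) (β : ℝ),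
      gradient (fun r => E kl r + β * C r) (rstar kl β) = 0)
    (L : (Fin M → ℝ) × (Fin M → ℝ) → ℝ) (hL : ∀ kl, L kl = C (rstar kl 0))
    (ω T : ℝ) (hω : 0 < ω) (hT : T = 2 * Real.pi / ω)
    (kl : (Fin M → ℝ) × (Fin M → ℝ))
    (a b : ℝ → EuclideanSpace ℝ (Fin M))
    (ha : ∀ γ : ℝ, a γ = (1 / T) • ∫ t in (0 : ℝ)..T, rstar kl (γ * Real.sin (ω * t)))
    (hb : ∀ γ : ℝ,
      b γ = (2 / T) • ∫ t in (0 : ℝ)..T, Real.sin (ω * t) • rstar kl (γ * Real.sin (ω * t)))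
    (e : Fin M) :
    Asymptotics.IsBigO (nhds (0 : ℝ))
      (fun γ : ℝ =>
        b γ e * (a γ e - kl.2 e) -
          γ * fderiv ℝ L kl (Pi.single e 1, 0))
      (fun γ : ℝ => γ ^ 3) := by
  subst hT
  set φ := rstar kl
  have hφ : ContDiff ℝ 3 φ := hr.comp (contDiff_const.prodMk contDiff_id)
  have ha' : (fun γ => a γ e - φ 0 e) =O[nhds 0] fun γ => γ ^ 2 :=
    ((EuclideanSpace.proj (𝕜 := ℝ) e).isBigO_comp _ _).trans
      (isBigO_mean_comp_mul_sin_sub (hφ.of_le (by norm_num)) hω.ne') |>.congr_left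
      fun γ => by simp [ha]
  have hb' : (fun γ => b γ e - γ * deriv φ 0 e) =O[nhds 0] fun γ => γ ^ 3 :=
    ((EuclideanSpace.proj (𝕜 := ℝ) e).isBigO_comp _ _).trans
      (isBigO_sinCoeff_comp_mul_sin_sub hφ hω.ne') |>.congr_left
      fun γ => by simp [hb]
  simp_rw [funext hL, fderiv_loss_single_springConstant (hEnl.of_le (by norm_num)) hC hEdef
    (hr.of_le (by norm_num)) heq kl e]
  exact isBigO_mul_sub_const_sub ha' hb' _
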